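/- Let d ≥ 1 and β ∈ ℝ. There is a constant C = C(d) > 0 such that for every finite signed Borel measure μ on ℝ^d with ‖μ‖_B := sup_{t>0} t^{(d−β)/2} ‖p_t ∗ μ‖_{L^∞} < ∞ and every R > 0, ∫_{B(0,R)} |μ̂(ξ)|² dξ ≤ C R^{d−β} ‖μ‖ ‖μ‖_B. -/

import Mathlib

open MeasureTheory Real
open scoped ENNReal

noncomputable section

/-- Euclidean space `ℝ^d`. -/
abbrev Ed (d : ℕ) := EuclideanSpace ℝ (Fin d)

/-- The heat kernel `p_t(x) = (4πt)^{-d/2} exp(-|x|²/(4t))`. -/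
def heatKernel (d : ℕ) (t : ℝ) (x : Ed d) : ℝ :=
  (4 * π * t) ^ (-(d : ℝ) / 2) * Real.exp (-‖x‖ ^ 2 / (4 * t))

/-- Integral of a real function against a finite signed measure. -/
def smIntegral {d : ℕ} (ν : MeasureTheory.SignedMeasure (Ed d)) (f : Ed d → ℝ) : ℝ :=
  (∫ x, f x ∂ν.toJordanDecomposition.posPart) - ∫ x, f x ∂ν.toJordanDecomposition.negPart

/-- Heat-kernel convolution `(p_t ∗ ν)(x)` of a finite signed measure. -/
def heatConv (d : ℕ) (t : ℝ) (ν : MeasureTheory.SignedMeasure (Ed d)) (x : Ed d) : ℝ :=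
  smIntegral ν (fun y => heatKernel d t (x - y))

/-- The Fourier transform `ν̂(ξ) = ∫ exp(-2πi x·ξ) dν(x)` of a finite signed measure. -/
def fourierSM (d : ℕ) (ν : MeasureTheory.SignedMeasure (Ed d)) (ξ : Ed d) : ℂ :=
  (∫ x, Complex.exp (-(2 * π * Complex.I) * ((inner ℝ x ξ : ℝ) : ℂ)) ∂ν.toJordanDecomposition.posPart)
  - ∫ x, Complex.exp (-(2 * π * Complex.I) * ((inner ℝ x ξ : ℝ) : ℂ)) ∂ν.toJordanDecomposition.negPart

/-- The Besov `Ḃ^{β-d}_{∞,∞}` norm `sup_{t>0} t^{(d-β)/2} ‖p_t ∗ ν‖_∞`. -/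
def besovNorm (d : ℕ) (β : ℝ) (ν : MeasureTheory.SignedMeasure (Ed d)) : ℝ≥0∞ :=
  ⨆ t : {t : ℝ // 0 < t},
    ENNReal.ofReal (t.1 ^ (((d : ℝ) - β) / 2)) * eLpNorm (heatConv d t.1 ν) ⊤ volume

/-- The weak `L^p` quasinorm `sup_{λ>0} λ |{|g| > λ}|^{1/p}`. -/
def weakNorm (d : ℕ) (p : ℝ) (g : Ed d → ℂ) : ℝ≥0∞ :=
  ⨆ l : {l : ℝ // 0 < l},
    ENNReal.ofReal l.1 * (volume {ξ : Ed d | l.1 < ‖g ξ‖}) ^ (1 / p)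

/-- Total variation of a signed measure, as a real number. -/
def tv {d : ℕ} (ν : MeasureTheory.SignedMeasure (Ed d)) : ℝ :=
  (ν.totalVariation Set.univ).toReal


/-! On `B(0,R)` the Gaussian `e^{-4π²t|ξ|²}` with `t = R⁻²` is at least `e^{-4π²}`, so
`∫_{B(0,R)} |μ̂|² ≤ e^{4π²} ∫ e^{-4π²t|ξ|²} |μ̂(ξ)|² dξ`. Since `e^{-4π²t|ξ|²}` is the Fourier
transform of `p_t`, Fubini turns the right-hand integral into `∫ (p_t ∗ μ) dμ`, which is at most
`‖p_t ∗ μ‖_∞ ‖μ‖ ≤ t^{-(d-β)/2} ‖μ‖_B ‖μ‖ = R^{d-β} ‖μ‖_B ‖μ‖`. -/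

open FourierTransform

theorem enorm_le_eLpNorm_top_of_continuous {X E : Type*} [TopologicalSpace X]
    [MeasurableSpace X] {μ : Measure X} [μ.IsOpenPosMeasure] [NormedAddCommGroup E]
    {f : X → E} (hf : Continuous f) (x : X) : ‖f x‖ₑ ≤ eLpNorm f ⊤ μ := by
  have hdense := (Measure.dense_of_ae (ae_le_eLpNormEssSup (f := f) (μ := μ))).closure_eq
  rw [(isClosed_le hf.enorm continuous_const).closure_eq, ← eLpNorm_exponent_top] at hdense
  exact (hdense.symm ▸ Set.mem_univ x : x ∈ {y | ‖f y‖ₑ ≤ eLpNorm f ⊤ μ})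

theorem setLIntegral_ball_le_lintegral_exp_mul {V : Type*} [NormedAddCommGroup V]
    [MeasurableSpace V] [OpensMeasurableSpace V] (μ : Measure V) {R : ℝ} (hR : 0 < R) {c : ℝ}
    (hc : 0 ≤ c) (f : V → ℝ≥0∞) :
    ∫⁻ ξ in Metric.ball 0 R, f ξ ∂μ
      ≤ ENNReal.ofReal (rexp c)
        * ∫⁻ ξ, ENNReal.ofReal (rexp (-(c * (R ^ 2)⁻¹) * ‖ξ‖ ^ 2)) * f ξ ∂μ := by
  rw [← lintegral_const_mul' _ _ ENNReal.ofReal_ne_top]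
  refine (setLIntegral_le_lintegral _ _).trans'
    (setLIntegral_mono' measurableSet_ball fun ξ hξ => ?_)
  rw [← mul_assoc, ← ENNReal.ofReal_mul (exp_pos c).le, ← exp_add]
  refine le_mul_of_one_le_left' (ENNReal.one_le_ofReal.2 (one_le_exp ?_))
  have hξ : ‖ξ‖ ^ 2 ≤ R ^ 2 := pow_le_pow_left₀ (norm_nonneg ξ) (mem_ball_zero_iff.1 hξ).le 2
  have : c * (R ^ 2)⁻¹ * ‖ξ‖ ^ 2 ≤ c := by
    rw [mul_assoc, inv_mul_eq_div]
    exact mul_le_of_le_one_right hc ((div_le_one (by positivity)).2 hξ)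
  linarith

theorem inv_sq_rpow_neg_half {R : ℝ} (hR : 0 < R) (a : ℝ) : (R ^ 2)⁻¹ ^ (-(a / 2)) = R ^ a := by
  rw [inv_rpow (by positivity), ← rpow_neg (by positivity), neg_neg, ← rpow_natCast,
    ← rpow_mul hR.le]
  ring_nf

section HeatKernel

variable {d : ℕ} {t : ℝ}

theorem heatKernel_nonneg (ht : 0 < t) (x : Ed d) : 0 ≤ heatKernel d t x := by
  unfold heatKernel
  positivity

theorem norm_heatKernel_le (ht : 0 < t) (x : Ed d) :
    ‖heatKernel d t x‖ ≤ (4 * π * t) ^ (-(d : ℝ) / 2) := by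
  rw [Real.norm_of_nonneg (heatKernel_nonneg ht x), heatKernel]
  refine mul_le_of_le_one_right (by positivity) (exp_le_one_iff.2 ?_)
  have : 0 ≤ ‖x‖ ^ 2 / (4 * t) := by positivity
  rw [neg_div]
  linarith

theorem continuous_heatKernel : Continuous (heatKernel d t) := by
  unfold heatKernel
  fun_prop

theorem integrable_heatKernel_comp_sub (ht : 0 < t) (μ : Measure (Ed d × Ed d))
    [IsFiniteMeasure μ] :
    Integrable (fun p => heatKernel d t (p.1 - p.2)) μ :=
  .of_bound (continuous_heatKernel.comp continuous_sub).aestronglyMeasurable _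
    (.of_forall fun _ => norm_heatKernel_le ht _)

theorem continuous_integral_heatKernel_sub (ht : 0 < t) (μ : Measure (Ed d)) [IsFiniteMeasure μ] :
    Continuous fun x => ∫ y, heatKernel d t (x - y) ∂μ :=
  continuous_of_dominated (fun _ => (continuous_heatKernel.comp
      (continuous_const.sub continuous_id)).aestronglyMeasurable)
    (fun _ => .of_forall fun _ => norm_heatKernel_le ht _) (integrable_const _)
    (.of_forall fun _ => continuous_heatKernel.comp (continuous_id.sub continuous_const))

theorem integrable_integral_heatKernel_sub (ht : 0 < t) (μ μ' : Measure (Ed d))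
    [IsFiniteMeasure μ] [IsFiniteMeasure μ'] :
    Integrable (fun x => ∫ y, heatKernel d t (x - y) ∂μ) μ' :=
  .of_bound (continuous_integral_heatKernel_sub ht μ).aestronglyMeasurable _
    (.of_forall fun _ => norm_integral_le_of_norm_le_const
      (.of_forall fun _ => norm_heatKernel_le ht _))

-- `e^{-4π²t|ξ|²}`, the Fourier transform of the heat kernel `p_t`.
def heatMultiplier (t : ℝ) (ξ : Ed d) : ℝ := rexp (-(4 * π ^ 2 * t) * ‖ξ‖ ^ 2)

theorem heatMultiplier_pos (t : ℝ) (ξ : Ed d) : 0 < heatMultiplier t ξ := exp_pos _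

theorem integrable_heatMultiplier (ht : 0 < t) : Integrable (heatMultiplier (d := d) t) := by
  have h := (GaussianFourier.integrable_cexp_neg_mul_sq_norm_add (V := Ed d)
    (b := ((4 * π ^ 2 * t : ℝ) : ℂ)) (by simp only [Complex.ofReal_re]; positivity) 0 0).norm
  refine h.congr (Filter.Eventually.of_forall fun ξ => ?_)
  simp only [heatMultiplier, Complex.norm_exp]
  norm_num [← Complex.ofReal_pow]

theorem integrable_heatMultiplier_mul {𝕜 : Type*} [RCLike 𝕜] (ht : 0 < t) {G : Ed d → 𝕜}
    (hG : Continuous G) {C : ℝ} (hGC : ∀ ξ, ‖G ξ‖ ≤ C) :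
    Integrable (fun ξ => (heatMultiplier t ξ : 𝕜) * G ξ) :=
  ((integrable_heatMultiplier ht).ofReal (𝕜 := 𝕜)).mul_bdd hG.aestronglyMeasurable
    (.of_forall hGC)

def fourierPhase (x ξ : Ed d) : ℂ := Complex.exp (-(2 * π * Complex.I) * ((inner ℝ x ξ : ℝ) : ℂ))

theorem norm_fourierPhase (x ξ : Ed d) : ‖fourierPhase x ξ‖ = 1 := by
  rw [fourierPhase, Complex.norm_exp]
  norm_num

theorem continuous_fourierPhase : Continuous fun p : Ed d × Ed d => fourierPhase p.1 p.2 := by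
  unfold fourierPhase
  fun_prop

theorem fourierPhase_mul_conj (x y ξ : Ed d) :
    fourierPhase x ξ * starRingEnd ℂ (fourierPhase y ξ) = fourierPhase (x - y) ξ := by
  simp only [fourierPhase, ← Complex.exp_conj, ← Complex.exp_add, inner_sub_left, map_mul,
    map_neg, Complex.conj_I, Complex.conj_ofReal, map_ofNat]
  push_cast
  ring_nf

theorem integral_fourierPhase_mul_heatMultiplier (ht : 0 < t) (z : Ed d) :
    ∫ ξ, fourierPhase z ξ * heatMultiplier t ξ = heatKernel d t z := by
  have hb : 0 < 4 * π ^ 2 * t := by positivity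
  have hfourier : ∫ ξ, fourierPhase z ξ * heatMultiplier t ξ
      = 𝓕 (fun ξ : Ed d => Complex.exp (-((4 * π ^ 2 * t : ℝ) : ℂ) * ‖ξ‖ ^ 2)) z := by
    rw [fourier_eq']
    refine integral_congr_ae (Filter.Eventually.of_forall fun ξ => ?_)
    simp only [fourierPhase, heatMultiplier, smul_eq_mul, real_inner_comm z, Complex.ofReal_exp]
    push_cast
    ring_nf
  have hbase : π / (4 * π ^ 2 * t) = (4 * π * t)⁻¹ := by
    field_simp [pi_ne_zero]
  rw [hfourier, fourier_gaussian_innerProductSpace (b := ((4 * π ^ 2 * t : ℝ) : ℂ))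
      (by rw [Complex.ofReal_re]; exact hb), finrank_euclideanSpace_fin,
    ← Complex.ofReal_div, hbase, show ((d : ℂ) / 2) = (((d : ℝ) / 2 : ℝ) : ℂ) by push_cast; ring,
    ← Complex.ofReal_cpow (by positivity), heatKernel, Real.inv_rpow (by positivity),
    ← Real.rpow_neg (by positivity), neg_div]
  push_cast
  congr 2
  field_simp [pi_ne_zero]

def fourierMeasure (μ : Measure (Ed d)) (ξ : Ed d) : ℂ := ∫ x, fourierPhase x ξ ∂μ

theorem continuous_fourierMeasure (μ : Measure (Ed d)) [IsFiniteMeasure μ] :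
    Continuous (fourierMeasure μ) :=
  continuous_of_dominated (fun _ => (continuous_fourierPhase.comp
      (continuous_id.prodMk continuous_const)).aestronglyMeasurable)
    (fun _ => .of_forall fun _ => (norm_fourierPhase _ _).le) (integrable_const 1)
    (.of_forall fun _ => continuous_fourierPhase.comp (continuous_const.prodMk continuous_id))

theorem norm_fourierMeasure_le (μ : Measure (Ed d)) [IsFiniteMeasure μ] (ξ : Ed d) :
    ‖fourierMeasure μ ξ‖ ≤ μ.real Set.univ :=
  (norm_integral_le_of_norm_le_const (.of_forall fun x => (norm_fourierPhase x ξ).le)).trans_eq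
    (one_mul _)

theorem integrable_heatMultiplier_mul_fourierMeasure_mul (ht : 0 < t) (μ : Measure (Ed d))
    [IsFiniteMeasure μ] {G : Ed d → ℂ} (hG : Continuous G) {C : ℝ} (hGC : ∀ ξ, ‖G ξ‖ ≤ C) :
    Integrable (fun ξ => (heatMultiplier t ξ : ℂ) * (fourierMeasure μ ξ * G ξ)) :=
  integrable_heatMultiplier_mul ht ((continuous_fourierMeasure μ).mul hG) fun ξ =>
    (norm_mul_le _ _).trans (mul_le_mul (norm_fourierMeasure_le μ ξ) (hGC ξ) (norm_nonneg _)
      measureReal_nonneg)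

theorem integral_heatMultiplier_mul_fourierMeasure_mul_conj (ht : 0 < t)
    (μ₁ μ₂ : Measure (Ed d)) [IsFiniteMeasure μ₁] [IsFiniteMeasure μ₂] :
    ∫ ξ, (heatMultiplier t ξ : ℂ) * (fourierMeasure μ₁ ξ * starRingEnd ℂ (fourierMeasure μ₂ ξ))
      = ((∫ x, ∫ y, heatKernel d t (x - y) ∂μ₂ ∂μ₁ : ℝ) : ℂ) := by
  have hprod : ∀ ξ, fourierMeasure μ₁ ξ * starRingEnd ℂ (fourierMeasure μ₂ ξ)
      = ∫ p, fourierPhase (p.1 - p.2) ξ ∂(μ₁.prod μ₂) := fun ξ => by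
    rw [fourierMeasure, fourierMeasure, ← integral_conj, ← integral_prod_mul]
    simp_rw [fourierPhase_mul_conj]
  have hint : Integrable (fun q : Ed d × (Ed d × Ed d) =>
      (heatMultiplier t q.1 : ℂ) * fourierPhase (q.2.1 - q.2.2) q.1)
      (volume.prod (μ₁.prod μ₂)) := by
    refine Integrable.mul_bdd (c := 1) ?_ ?_ (.of_forall fun q => (norm_fourierPhase _ _).le)
    · exact ((integrable_heatMultiplier ht).ofReal (𝕜 := ℂ)).comp_fst _
    · exact (continuous_fourierPhase.comp
        ((continuous_snd.fst.sub continuous_snd.snd).prodMk continuous_fst)).aestronglyMeasurable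
  calc ∫ ξ, (heatMultiplier t ξ : ℂ) * (fourierMeasure μ₁ ξ * starRingEnd ℂ (fourierMeasure μ₂ ξ))
      = ∫ ξ, ∫ p, (heatMultiplier t ξ : ℂ) * fourierPhase (p.1 - p.2) ξ ∂(μ₁.prod μ₂) := by
        simp_rw [hprod, integral_const_mul]
    _ = ∫ p, (∫ ξ, fourierPhase (p.1 - p.2) ξ * heatMultiplier t ξ) ∂(μ₁.prod μ₂) := by
        simp_rw [integral_integral_swap (f := fun ξ (p : Ed d × Ed d) =>
          (heatMultiplier t ξ : ℂ) * fourierPhase (p.1 - p.2) ξ) hint, mul_comm]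
    _ = ∫ p, ((heatKernel d t (p.1 - p.2) : ℝ) : ℂ) ∂(μ₁.prod μ₂) := by
        simp_rw [integral_fourierPhase_mul_heatMultiplier ht]
    _ = ((∫ x, ∫ y, heatKernel d t (x - y) ∂μ₂ ∂μ₁ : ℝ) : ℂ) := by
        rw [← integral_prod _ (integrable_heatKernel_comp_sub ht _)]
        exact integral_ofReal

end HeatKernel

section SignedMeasure

variable {d : ℕ} {t : ℝ} (ν : SignedMeasure (Ed d))

local notation "P" => ν.toJordanDecomposition.posPart
local notation "N" => ν.toJordanDecomposition.negPart

theorem continuous_fourierSM : Continuous (fourierSM d ν) :=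
  (continuous_fourierMeasure P).sub (continuous_fourierMeasure N)

theorem fourierSM_apply (ξ : Ed d) : fourierSM d ν ξ = fourierMeasure P ξ - fourierMeasure N ξ :=
  rfl

theorem norm_fourierSM_le (ξ : Ed d) : ‖fourierSM d ν ξ‖ ≤ tv ν := by
  have htv : tv ν = (P).real Set.univ + (N).real Set.univ := measureReal_add_apply
  exact htv ▸ (norm_sub_le _ _).trans
    (add_le_add (norm_fourierMeasure_le P ξ) (norm_fourierMeasure_le N ξ))

theorem continuous_heatConv (ht : 0 < t) : Continuous (heatConv d t ν) :=
  (continuous_integral_heatKernel_sub ht P).sub (continuous_integral_heatKernel_sub ht N)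

theorem integral_heatMultiplier_mul_fourierMeasure_mul_conj_fourierSM (ht : 0 < t)
    (μ : Measure (Ed d)) [IsFiniteMeasure μ] :
    ∫ ξ, (heatMultiplier t ξ : ℂ) * (fourierMeasure μ ξ * starRingEnd ℂ (fourierSM d ν ξ))
      = ((∫ x, heatConv d t ν x ∂μ : ℝ) : ℂ) := by
  have hint : ∀ (μ' : Measure (Ed d)) [IsFiniteMeasure μ'], Integrable fun ξ =>
      (heatMultiplier t ξ : ℂ) * (fourierMeasure μ ξ * starRingEnd ℂ (fourierMeasure μ' ξ)) :=
    fun μ' _ => integrable_heatMultiplier_mul_fourierMeasure_mul ht μ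
      (Complex.continuous_conj.comp (continuous_fourierMeasure μ'))
      fun ξ => (RCLike.norm_conj _).trans_le (norm_fourierMeasure_le μ' ξ)
  simp only [fourierSM_apply, heatConv, smIntegral, map_sub, mul_sub]
  rw [integral_sub (hint P) (hint N), integral_sub (integrable_integral_heatKernel_sub ht P μ)
    (integrable_integral_heatKernel_sub ht N μ)]
  simp only [integral_heatMultiplier_mul_fourierMeasure_mul_conj ht]
  push_cast
  rfl

theorem integral_heatMultiplier_mul_sq_norm_fourierSM (ht : 0 < t) :
    ∫ ξ, heatMultiplier t ξ * ‖fourierSM d ν ξ‖ ^ 2 = smIntegral ν (heatConv d t ν) := by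
  have hint : ∀ (μ : Measure (Ed d)) [IsFiniteMeasure μ], Integrable fun ξ =>
      (heatMultiplier t ξ : ℂ) * (fourierMeasure μ ξ * starRingEnd ℂ (fourierSM d ν ξ)) :=
    fun μ _ => integrable_heatMultiplier_mul_fourierMeasure_mul ht μ
      (Complex.continuous_conj.comp (continuous_fourierSM ν))
      fun ξ => (RCLike.norm_conj _).trans_le (norm_fourierSM_le ν ξ)
  have hexpand : ∀ ξ, ((heatMultiplier t ξ * ‖fourierSM d ν ξ‖ ^ 2 : ℝ) : ℂ)
      = (heatMultiplier t ξ : ℂ) * (fourierMeasure P ξ * starRingEnd ℂ (fourierSM d ν ξ))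
        - (heatMultiplier t ξ : ℂ) * (fourierMeasure N ξ * starRingEnd ℂ (fourierSM d ν ξ)) := by
    intro ξ
    rw [← mul_sub, ← sub_mul, ← fourierSM_apply, Complex.mul_conj, Complex.normSq_eq_norm_sq]
    push_cast
    rfl
  apply Complex.ofReal_injective
  rw [← integral_complex_ofReal, integral_congr_ae (.of_forall hexpand),
    integral_sub (hint P) (hint N),
    integral_heatMultiplier_mul_fourierMeasure_mul_conj_fourierSM ν ht,
    integral_heatMultiplier_mul_fourierMeasure_mul_conj_fourierSM ν ht, smIntegral]
  push_cast
  rfl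

theorem enorm_smIntegral_le {f : Ed d → ℝ} {C : ℝ≥0∞} (hC : ∀ x, ‖f x‖ₑ ≤ C) :
    ‖smIntegral ν f‖ₑ ≤ C * ν.totalVariation Set.univ := by
  have hbound : ∀ μ : Measure (Ed d), ‖∫ x, f x ∂μ‖ₑ ≤ C * μ Set.univ := fun μ =>
    (enorm_integral_le_lintegral_enorm f).trans ((lintegral_mono hC).trans_eq (lintegral_const C))
  calc ‖smIntegral ν f‖ₑ ≤ ‖∫ x, f x ∂P‖ₑ + ‖∫ x, f x ∂N‖ₑ := enorm_sub_le
    _ ≤ C * P Set.univ + C * N Set.univ := add_le_add (hbound P) (hbound N)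
    _ = C * ν.totalVariation Set.univ := (mul_add _ _ _).symm

theorem lintegral_heatMultiplier_mul_sq_norm_fourierSM_le (ht : 0 < t) :
    ∫⁻ ξ, ENNReal.ofReal (heatMultiplier t ξ) * ENNReal.ofReal (‖fourierSM d ν ξ‖ ^ 2)
      ≤ eLpNorm (heatConv d t ν) ⊤ volume * ν.totalVariation Set.univ := by
  have hint : Integrable fun ξ => heatMultiplier t ξ * ‖fourierSM d ν ξ‖ ^ 2 :=
    integrable_heatMultiplier_mul ht ((continuous_fourierSM ν).norm.pow 2) fun ξ => by
      rw [Real.norm_of_nonneg (by positivity)]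
      exact pow_le_pow_left₀ (norm_nonneg _) (norm_fourierSM_le ν ξ) 2
  rw [lintegral_congr fun ξ => (ENNReal.ofReal_mul (heatMultiplier_pos t ξ).le).symm,
    ← ofReal_integral_eq_lintegral_ofReal hint
      (.of_forall fun ξ => mul_nonneg (heatMultiplier_pos t ξ).le (sq_nonneg _)),
    integral_heatMultiplier_mul_sq_norm_fourierSM ν ht]
  exact (ofReal_le_enorm _).trans
    (enorm_smIntegral_le ν (enorm_le_eLpNorm_top_of_continuous (continuous_heatConv ν ht)))

theorem eLpNorm_heatConv_le_besovNorm (β : ℝ) (ht : 0 < t) :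
    eLpNorm (heatConv d t ν) ⊤ volume
      ≤ ENNReal.ofReal (t ^ (-(((d : ℝ) - β) / 2))) * besovNorm d β ν := by
  have hscale : ENNReal.ofReal (t ^ (-(((d : ℝ) - β) / 2)))
      * ENNReal.ofReal (t ^ (((d : ℝ) - β) / 2)) = 1 := by
    rw [← ENNReal.ofReal_mul (by positivity), ← rpow_add ht, neg_add_cancel, rpow_zero,
      ENNReal.ofReal_one]
  calc eLpNorm (heatConv d t ν) ⊤ volume
      = ENNReal.ofReal (t ^ (-(((d : ℝ) - β) / 2)))
          * (ENNReal.ofReal (t ^ (((d : ℝ) - β) / 2)) * eLpNorm (heatConv d t ν) ⊤ volume) := by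
        rw [← mul_assoc, hscale, one_mul]
    _ ≤ ENNReal.ofReal (t ^ (-(((d : ℝ) - β) / 2))) * besovNorm d β ν :=
        mul_le_mul_right (le_iSup (fun s : {s : ℝ // 0 < s} =>
          ENNReal.ofReal (s.1 ^ (((d : ℝ) - β) / 2)) * eLpNorm (heatConv d s.1 ν) ⊤ volume)
          ⟨t, ht⟩) _

end SignedMeasure

theorem stmt8_general (d : ℕ) (β : ℝ) :
    ∃ C : ℝ, 0 < C ∧
      ∀ ν : MeasureTheory.SignedMeasure (Ed d), besovNorm d β ν ≠ ⊤ →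
      ∀ R : ℝ, 0 < R →
        (∫⁻ ξ in Metric.ball (0 : Ed d) R, ENNReal.ofReal (‖fourierSM d ν ξ‖ ^ 2))
          ≤ ENNReal.ofReal (C * R ^ ((d : ℝ) - β)) *
              ν.totalVariation Set.univ * besovNorm d β ν := by
  refine ⟨rexp (4 * π ^ 2), exp_pos _, fun ν _ R hR => ?_⟩
  have ht : 0 < (R ^ 2)⁻¹ := by positivity
  calc ∫⁻ ξ in Metric.ball (0 : Ed d) R, ENNReal.ofReal (‖fourierSM d ν ξ‖ ^ 2)
      ≤ ENNReal.ofReal (rexp (4 * π ^ 2)) * ∫⁻ ξ, ENNReal.ofReal (heatMultiplier (R ^ 2)⁻¹ ξ)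
          * ENNReal.ofReal (‖fourierSM d ν ξ‖ ^ 2) :=
        setLIntegral_ball_le_lintegral_exp_mul volume hR (by positivity) _
    _ ≤ ENNReal.ofReal (rexp (4 * π ^ 2)) * (eLpNorm (heatConv d (R ^ 2)⁻¹ ν) ⊤ volume
          * ν.totalVariation Set.univ) := by
        gcongr
        exact lintegral_heatMultiplier_mul_sq_norm_fourierSM_le ν ht
    _ ≤ ENNReal.ofReal (rexp (4 * π ^ 2)) * (ENNReal.ofReal ((R ^ 2)⁻¹ ^ (-(((d : ℝ) - β) / 2)))
          * besovNorm d β ν * ν.totalVariation Set.univ) := by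
        gcongr
        exact eLpNorm_heatConv_le_besovNorm ν β ht
    _ = ENNReal.ofReal (rexp (4 * π ^ 2) * R ^ ((d : ℝ) - β)) *
          ν.totalVariation Set.univ * besovNorm d β ν := by
        rw [inv_sq_rpow_neg_half hR, ENNReal.ofReal_mul (exp_pos _).le]
        ring

/-- For `d ≥ 1` and `β ∈ ℝ` there is `C = C(d) > 0` such that every finite signed
measure `μ` on `ℝ^d` with `‖μ‖_B = sup_{t>0} t^{(d-β)/2}‖p_t ∗ μ‖_∞ < ∞` satisfies
`∫_{B(0,R)} |μ̂(ξ)|² dξ ≤ C R^{d-β} ‖μ‖ ‖μ‖_B` for all `R > 0`. -/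
theorem stmt8 (d : ℕ) (hd : 1 ≤ d) (β : ℝ) :
    ∃ C : ℝ, 0 < C ∧
      ∀ ν : MeasureTheory.SignedMeasure (Ed d), besovNorm d β ν ≠ ⊤ →
      ∀ R : ℝ, 0 < R →
        (∫⁻ ξ in Metric.ball (0 : Ed d) R, ENNReal.ofReal (‖fourierSM d ν ξ‖ ^ 2))
          ≤ ENNReal.ofReal (C * R ^ ((d : ℝ) - β)) *
              ν.totalVariation Set.univ * besovNorm d β ν :=
  stmt8_general d β
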